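/- arXiv:2503.16626 — 3 statements merged into one kernel-verified Lean document; each statement's English description precedes it below -/
import Mathlib

section
/- Let f : X → Y be a fully closed surjection between compact Hausdorff spaces. Then X is metrizable if and only if the following three conditions hold: Y is metrizable; every fiber f⁻¹(y), y ∈ Y, is metrizable; and the set {y ∈ Y : |f⁻¹(y)| ≥ 2} of nontrivial fibers is countable. -/
open Set Topology

/-- The small image `f^#(A) := Y \ f(X \ A)`. -/
def smallImage {X Y : Type*} (f : X → Y) (A : Set X) : Set Y := (f '' Aᶜ)ᶜ

/-- `f` is fully closed at `y` if for every finite open cover `U₁, …, Uₛ` of `f⁻¹(y)`,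
the set `{y} ∪ ⋃ᵢ f^#(Uᵢ)` is a neighborhood of `y`. -/
def FullyClosedAt {X Y : Type*} [TopologicalSpace X] [TopologicalSpace Y]
    (f : X → Y) (y : Y) : Prop :=
  ∀ (s : ℕ) (U : Fin s → Set X), (∀ i, IsOpen (U i)) → (f ⁻¹' {y} ⊆ ⋃ i, U i) →
    ({y} ∪ ⋃ i, smallImage f (U i)) ∈ nhds y

/-- A continuous surjection is fully closed if it is fully closed at every point. -/
def FullyClosed {X Y : Type*} [TopologicalSpace X] [TopologicalSpace Y] (f : X → Y) : Prop :=
  Continuous f ∧ Function.Surjective f ∧ ∀ y, FullyClosedAt f y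

open TopologicalSpace

lemma mem_smallImage {X Y : Type*} {f : X → Y} {U : Set X} {y : Y} :
    y ∈ smallImage f U ↔ f ⁻¹' {y} ⊆ U := by
  constructor
  · intro h x hx
    by_contra hxu
    exact h ⟨x, hxu, hx⟩
  · rintro h ⟨x, hxu, rfl⟩
    exact hxu (h rfl)

lemma isOpen_smallImage {X Y : Type*} [TopologicalSpace X] [TopologicalSpace Y]
    {f : X → Y} (hc : IsClosedMap f) {U : Set X} (hU : IsOpen U) :
    IsOpen (smallImage f U) :=
  (hc _ hU.isClosed_compl).isOpen_compl

/-- A fully closed map sends disjoint closed sets to sets with finite intersection. -/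
lemma fully_closed_finite_inter {X Y : Type*} [TopologicalSpace X] [TopologicalSpace Y]
    [CompactSpace Y] {f : X → Y} (hf : ∀ y, FullyClosedAt f y)
    {F₁ F₂ : Set X} (h₁ : IsClosed F₁) (h₂ : IsClosed F₂) (hd : Disjoint F₁ F₂) :
    (f '' F₁ ∩ f '' F₂).Finite := by
  set S := f '' F₁ ∩ f '' F₂ with hS
  have key : ∀ y : Y, ∃ N ∈ nhds y, N ∩ S ⊆ {y} := by
    intro y
    have hmem := hf y 2 ![F₁ᶜ, F₂ᶜ] (by
        intro i
        fin_cases i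
        · exact h₁.isOpen_compl
        · exact h₂.isOpen_compl)
      (by
        intro x _
        by_cases hx1 : x ∈ F₁
        · exact mem_iUnion.2 ⟨1, fun hx2 => (hd.ne_of_mem hx1 hx2) rfl⟩
        · exact mem_iUnion.2 ⟨0, hx1⟩)
    refine ⟨_, hmem, ?_⟩
    rintro z ⟨hzN, hz1, hz2⟩
    rcases hzN with hz | hz
    · exact hz
    · obtain ⟨i, hi⟩ := mem_iUnion.1 hz
      fin_cases i
      · exact absurd hz1 (by simpa [smallImage] using hi)
      · exact absurd hz2 (by simpa [smallImage] using hi)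
  choose N hN hNS using key
  obtain ⟨t, ht⟩ := isCompact_univ.elim_nhds_subcover N (fun y _ => hN y)
  refine t.finite_toSet.subset fun z hz => ?_
  obtain ⟨y, hyt, hzy⟩ := by
    have := ht.2 (mem_univ z)
    simpa using this
  have : z ∈ ({y} : Set Y) := hNS y ⟨hzy, hz⟩
  rw [mem_singleton_iff.1 this]
  exact hyt

/-- For a closed metrizable subset `F` of a compact Hausdorff space,
there is a countable family of open sets of the ambient space forming an
"outer basis" along `F`. -/
lemma fiber_ext_family {X : Type*} [TopologicalSpace X] [CompactSpace X] [T2Space X]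
    (F : Set X) (hF : IsClosed F) (hm : MetrizableSpace F) :
    ∃ ℰ : Set (Set X), ℰ.Countable ∧ (∀ E ∈ ℰ, IsOpen E) ∧
      ∀ x ∈ F, ∀ O : Set X, IsOpen O → x ∈ O →
        ∃ E ∈ ℰ, x ∈ E ∧ closure E ∩ F ⊆ O := by
  haveI : CompactSpace F := isCompact_iff_compactSpace.mp hF.isCompact
  haveI := hm
  haveI : SecondCountableTopology F := by
    letI := metrizableSpaceMetric F
    infer_instance
  have hex : ∀ p : Set F × Set F, ∃ E : Set X, IsOpen E ∧
      (IsOpen p.2 → closure (Subtype.val '' p.1) ⊆ Subtype.val '' p.2 →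
        Subtype.val '' p.1 ⊆ E ∧ closure E ∩ F ⊆ Subtype.val '' p.2) := by
    rintro ⟨s, t⟩
    by_cases hc : IsOpen t ∧ closure (Subtype.val '' s) ⊆ Subtype.val '' t
    · obtain ⟨hto, hst⟩ := hc
      obtain ⟨U, hUo, hUt⟩ := isOpen_induced_iff.1 hto
      have himg : Subtype.val '' t = U ∩ F := by
        rw [← hUt, Subtype.image_preimage_coe]; exact inter_comm _ _
      have h2 : IsClosed (F \ Subtype.val '' t) := by
        have : F \ Subtype.val '' t = F ∩ Uᶜ := by
          rw [himg]; ext z; simp only [mem_diff, mem_inter_iff, mem_compl_iff]; tauto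
        rw [this]
        exact hF.inter hUo.isClosed_compl
      have hd : Disjoint (closure (Subtype.val '' s)) (F \ Subtype.val '' t) :=
        Set.disjoint_left.2 fun z hz hz2 => hz2.2 (hst hz)
      obtain ⟨G, V, hGo, hVo, hsG, htV, hGV⟩ := normal_separation isClosed_closure h2 hd
      refine ⟨G, hGo, fun _ _ => ⟨subset_closure.trans hsG, fun z hz => ?_⟩⟩
      by_contra hzt
      have hzV : z ∈ V := htV ⟨hz.2, hzt⟩
      have : closure G ⊆ Vᶜ :=
        closure_minimal (fun w hw hwv => Set.disjoint_left.1 hGV hw hwv) hVo.isClosed_compl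
      exact this hz.1 hzV
    · refine ⟨∅, isOpen_empty, fun h1 h2 => absurd ⟨h1, h2⟩ hc⟩
  choose g hgo hgspec using hex
  set B : Set (Set F) := countableBasis F with hBdef
  refine ⟨g '' (B ×ˢ B), ((countable_countableBasis F).prod (countable_countableBasis F)).image g,
    by rintro E ⟨p, -, rfl⟩; exact hgo p, ?_⟩
  intro x hxF O hOo hxO
  set x' : F := ⟨x, hxF⟩ with hx'
  have hO' : (Subtype.val ⁻¹' O : Set F) ∈ nhds x' :=
    (hOo.preimage continuous_subtype_val).mem_nhds hxO
  obtain ⟨K, hK, hKc, hKO⟩ := exists_mem_nhds_isClosed_subset hO'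
  obtain ⟨t, htB, hxt, htK⟩ := (isBasis_countableBasis F).exists_subset_of_mem_open
    (mem_interior_iff_mem_nhds.2 hK) isOpen_interior
  have htclO : closure t ⊆ Subtype.val ⁻¹' O :=
    (closure_minimal (htK.trans interior_subset) hKc).trans hKO
  obtain ⟨K₂, hK₂, hK₂c, hK₂t⟩ := exists_mem_nhds_isClosed_subset
    ((isOpen_of_mem_countableBasis htB).mem_nhds hxt)
  obtain ⟨s, hsB, hxs, hsK₂⟩ := (isBasis_countableBasis F).exists_subset_of_mem_open
    (mem_interior_iff_mem_nhds.2 hK₂) isOpen_interior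
  have hscl : closure s ⊆ t :=
    (closure_minimal (hsK₂.trans interior_subset) hK₂c).trans hK₂t
  have hcond : closure (Subtype.val '' s) ⊆ Subtype.val '' t := by
    rw [hF.isClosedEmbedding_subtypeVal.closure_image_eq]
    exact image_mono hscl
  obtain ⟨hsE, hEcl⟩ := hgspec (s, t) (isOpen_of_mem_countableBasis htB) hcond
  refine ⟨g (s, t), mem_image_of_mem g (mk_mem_prod hsB htB), hsE ⟨x', hxs, rfl⟩, ?_⟩
  intro z hz
  obtain ⟨w, hwt, rfl⟩ := hEcl hz
  exact htclO (subset_closure hwt)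

/-- The image of a second countable compactum under a continuous surjection
onto a Hausdorff space is second countable. -/
lemma secondCountable_of_image {X Y : Type*} [TopologicalSpace X] [CompactSpace X]
    [TopologicalSpace Y] [T2Space Y] {f : X → Y} (hcont : Continuous f)
    (hsurj : Function.Surjective f) [SecondCountableTopology X] :
    SecondCountableTopology Y := by
  have hclosed : IsClosedMap f := hcont.isClosedMap
  set W : Set (Set Y) := (fun s : Set (Set X) => smallImage f (⋃₀ s)) ''
    {s | s.Finite ∧ s ⊆ countableBasis X} with hW
  have hWc : W.Countable := (countable_setOf_finite_subset (countable_countableBasis X)).image _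
  have hbasis : IsTopologicalBasis W := by
    refine isTopologicalBasis_of_isOpen_of_nhds ?_ ?_
    · rintro u ⟨s, ⟨hsf, hsB⟩, rfl⟩
      exact isOpen_smallImage hclosed (isOpen_sUnion fun t ht =>
        isOpen_of_mem_countableBasis (hsB ht))
    · intro y u hyu huo
      have hfiber : IsCompact (f ⁻¹' {y}) := (isClosed_singleton.preimage hcont).isCompact
      obtain ⟨t, hfib_sub⟩ := hfiber.elim_finite_subcover
        (fun v : {v : Set X // v ∈ countableBasis X ∧ v ⊆ f ⁻¹' u} => (v : Set X))
        (fun v => isOpen_of_mem_countableBasis v.2.1)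
        (by
          intro x hx
          obtain ⟨v, hvB, hxv, hvu⟩ := (isBasis_countableBasis X).exists_subset_of_mem_open
            (show x ∈ f ⁻¹' u from by rwa [mem_preimage, mem_singleton_iff.1 hx])
            (huo.preimage hcont)
          exact mem_iUnion.2 ⟨⟨v, hvB, hvu⟩, hxv⟩)
      set s : Set (Set X) :=
        Subtype.val '' (t : Set {v : Set X // v ∈ countableBasis X ∧ v ⊆ f ⁻¹' u})
      refine ⟨smallImage f (⋃₀ s), ⟨s, ⟨t.finite_toSet.image _, ?_⟩, rfl⟩, ?_, ?_⟩
      · rintro v ⟨w, -, rfl⟩; exact w.2.1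
      · refine mem_smallImage.2 fun x hx => ?_
        obtain ⟨v, hvt, hxv⟩ := mem_iUnion₂.1 (hfib_sub hx)
        exact ⟨(v : Set X), ⟨v, by simpa using hvt, rfl⟩, hxv⟩
      · intro z hz
        obtain ⟨x, rfl⟩ := hsurj z
        have hfz : x ∈ ⋃₀ s := mem_smallImage.1 hz rfl
        obtain ⟨v, ⟨w, -, rfl⟩, hxv⟩ := hfz
        exact w.2.2 hxv
  exact hbasis.secondCountableTopology hWc

/-- Let `f : X → Y` be a fully closed surjection between compact Hausdorff spaces.
Then `X` is metrizable iff `Y` is metrizable, every fiber `f⁻¹(y)` is metrizable, and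
the set of nontrivial fibers is countable. -/
theorem stmt4 {X Y : Type} [TopologicalSpace X] [CompactSpace X] [T2Space X]
    [TopologicalSpace Y] [CompactSpace Y] [T2Space Y]
    (f : X → Y) (hf : FullyClosed f) :
    TopologicalSpace.MetrizableSpace X ↔
      (TopologicalSpace.MetrizableSpace Y ∧
       (∀ y : Y, TopologicalSpace.MetrizableSpace (f ⁻¹' {y})) ∧
       {y : Y | (f ⁻¹' {y}).Nontrivial}.Countable) := by
  obtain ⟨hcont, hsurj, hfc⟩ := hf
  have hclosed : IsClosedMap f := hcont.isClosedMap
  constructor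
  · intro hX
    haveI := hX
    haveI : SecondCountableTopology X := by
      letI := metrizableSpaceMetric X
      infer_instance
    haveI : SecondCountableTopology Y := secondCountable_of_image hcont hsurj
    refine ⟨inferInstance, fun y => inferInstance, ?_⟩
    -- countability of nontrivial fibers
    set P : Set (Set X × Set X) :=
      {p | p ∈ countableBasis X ×ˢ countableBasis X ∧ Disjoint (closure p.1) (closure p.2)}
    have key : {y : Y | (f ⁻¹' {y}).Nontrivial} ⊆
        ⋃ p ∈ P, f '' closure p.1 ∩ f '' closure p.2 := by
      rintro y ⟨x₁, hx₁, x₂, hx₂, hne⟩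
      obtain ⟨W₁, W₂, hW₁o, hW₂o, hx₁W, hx₂W, hWd⟩ := t2_separation hne
      obtain ⟨K₁, hK₁n, hK₁c, hK₁W⟩ := exists_mem_nhds_isClosed_subset (hW₁o.mem_nhds hx₁W)
      obtain ⟨U₁, hU₁B, hx₁U, hU₁K⟩ := (isBasis_countableBasis X).exists_subset_of_mem_open
        (mem_interior_iff_mem_nhds.2 hK₁n) isOpen_interior
      obtain ⟨K₂, hK₂n, hK₂c, hK₂W⟩ := exists_mem_nhds_isClosed_subset (hW₂o.mem_nhds hx₂W)
      obtain ⟨U₂, hU₂B, hx₂U, hU₂K⟩ := (isBasis_countableBasis X).exists_subset_of_mem_open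
        (mem_interior_iff_mem_nhds.2 hK₂n) isOpen_interior
      have hcl₁ : closure U₁ ⊆ W₁ :=
        (closure_minimal (hU₁K.trans interior_subset) hK₁c).trans hK₁W
      have hcl₂ : closure U₂ ⊆ W₂ :=
        (closure_minimal (hU₂K.trans interior_subset) hK₂c).trans hK₂W
      have hd : Disjoint (closure U₁) (closure U₂) := hWd.mono hcl₁ hcl₂
      refine mem_biUnion (show (U₁, U₂) ∈ P from ⟨mk_mem_prod hU₁B hU₂B, hd⟩) ?_
      exact ⟨⟨x₁, subset_closure hx₁U, mem_singleton_iff.1 hx₁⟩,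
        ⟨x₂, subset_closure hx₂U, mem_singleton_iff.1 hx₂⟩⟩
    have hPc : P.Countable :=
      (((countable_countableBasis X).prod (countable_countableBasis X)).mono
        (fun p hp => hp.1))
    exact Set.Countable.mono key
      (hPc.biUnion fun p hp =>
        (fully_closed_finite_inter hfc isClosed_closure isClosed_closure hp.2).countable)
  · rintro ⟨hY, hfib, hcnt⟩
    haveI := hY
    choose ℰ hℰc hℰo hℰ using fun y : Y =>
      fiber_ext_family (f ⁻¹' {y}) (isClosed_singleton.preimage hcont) (hfib y)
    haveI : SecondCountableTopology Y := by
      letI := metrizableSpaceMetric Y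
      infer_instance
    set N := {y : Y | (f ⁻¹' {y}).Nontrivial} with hN
    set Bs : Set (Set X) := ((f ⁻¹' ·) '' countableBasis Y) ∪
      ⋃ y ∈ N, image2 (fun E V => E ∩ f ⁻¹' V) (ℰ y) (countableBasis Y) with hBs
    have hBsc : Bs.Countable :=
      ((countable_countableBasis Y).image _).union
        (hcnt.biUnion fun y _ => Countable.image2 (hℰc y) (countable_countableBasis Y) _)
    have hbasis : IsTopologicalBasis Bs := by
      refine isTopologicalBasis_of_isOpen_of_nhds ?_ ?_
      · rintro u (⟨V, hV, rfl⟩ | hu)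
        · exact (isOpen_of_mem_countableBasis hV).preimage hcont
        · obtain ⟨y, -, E, hE, V, hV, rfl⟩ := by
            simpa only [mem_iUnion, mem_image2, exists_prop] using hu
          exact (hℰo y E hE).inter ((isOpen_of_mem_countableBasis hV).preimage hcont)
      · intro a u hau huo
        by_cases hsub : f ⁻¹' {f a} ⊆ u
        · have hmem : f a ∈ smallImage f u := mem_smallImage.2 hsub
          obtain ⟨V, hVB, haV, hVsub⟩ := (isBasis_countableBasis Y).exists_subset_of_mem_open
            hmem (isOpen_smallImage hclosed huo)
          exact ⟨f ⁻¹' V, Or.inl ⟨V, hVB, rfl⟩, haV,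
            fun z hz => mem_smallImage.1 (hVsub hz) rfl⟩
        · have hyN : f a ∈ N := by
            obtain ⟨z, hz1, hz2⟩ := not_subset.1 hsub
            exact ⟨z, hz1, a, rfl, fun h => hz2 (h ▸ hau)⟩
          obtain ⟨E, hEℰ, haE, hEcl⟩ := hℰ (f a) a rfl u huo hau
          have hCc : IsClosed (closure E \ u) :=
            isClosed_closure.inter huo.isClosed_compl
          have hfa : f a ∈ (f '' (closure E \ u))ᶜ := by
            rintro ⟨z, ⟨hz1, hz2⟩, hz3⟩
            exact hz2 (hEcl ⟨hz1, hz3⟩)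
          obtain ⟨V, hVB, haV, hVsub⟩ := (isBasis_countableBasis Y).exists_subset_of_mem_open
            hfa (hclosed _ hCc).isOpen_compl
          refine ⟨E ∩ f ⁻¹' V, Or.inr (mem_biUnion hyN (mem_image2_of_mem hEℰ hVB)),
            ⟨haE, haV⟩, ?_⟩
          rintro z ⟨hzE, hzV⟩
          by_contra hzu
          exact (hVsub hzV) ⟨z, ⟨subset_closure hzE, hzu⟩, rfl⟩
    haveI : SecondCountableTopology X := hbasis.secondCountableTopology hBsc
    infer_instance
end

section
/- Let π : X → Y be a continuous surjection between compact Hausdorff spaces. Then π is fully closed if and only if for every f ∈ C(X) and every ε > 0 the set {y ∈ Y : osc_{π⁻¹(y)} f > ε} is finite (that is, the family (osc_{π⁻¹(y)} f)_{y ∈ Y} belongs to c₀(Y)). -/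
open Set Topology

/-- The oscillation of a real-valued function on a set: `sup {f a - f b : a, b ∈ A}`. -/
noncomputable def osc {X : Type*} (f : X → ℝ) (A : Set X) : ℝ :=
  sSup ((fun p : X × X => f p.1 - f p.2) '' (A ×ˢ A))

lemma fc_inter {X Y : Type} [TopologicalSpace X] [TopologicalSpace Y] [CompactSpace Y]
    {π : X → Y} (hfc : ∀ y, FullyClosedAt π y)
    {F₁ F₂ : Set X} (h₁ : IsClosed F₁) (h₂ : IsClosed F₂) (hd : Disjoint F₁ F₂) :
    (π '' F₁ ∩ π '' F₂).Finite := by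
  set D := π '' F₁ ∩ π '' F₂ with hDdef
  have key : ∀ y : Y, ∃ N ∈ nhds y, N ∩ D ⊆ {y} := by
    intro y
    have hU : ∀ i : Fin 2, IsOpen (![F₂ᶜ, F₁ᶜ] i) := by
      intro i; fin_cases i
      · exact h₂.isOpen_compl
      · exact h₁.isOpen_compl
    have hcov : π ⁻¹' {y} ⊆ ⋃ i, ![F₂ᶜ, F₁ᶜ] i := by
      intro x _
      by_cases hx : x ∈ F₂
      · exact mem_iUnion.2 ⟨1, fun hx1 => disjoint_left.mp hd hx1 hx⟩
      · exact mem_iUnion.2 ⟨0, hx⟩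
    refine ⟨_, hfc y 2 ![F₂ᶜ, F₁ᶜ] hU hcov, ?_⟩
    rintro z ⟨hz1, hz2⟩
    rcases hz1 with hz1 | hz1
    · exact hz1
    · exfalso
      rcases mem_iUnion.mp hz1 with ⟨i, hi⟩
      fin_cases i
      · exact hi (by simpa [smallImage] using hz2.2)
      · exact hi (by simpa [smallImage] using hz2.1)
  choose N hN hND using key
  have hcov : univ ⊆ ⋃ y : Y, interior (N y) := fun y _ =>
    mem_iUnion.2 ⟨y, mem_interior_iff_mem_nhds.2 (hN y)⟩
  obtain ⟨t, ht⟩ := isCompact_univ.elim_finite_subcover (fun y => interior (N y))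
    (fun _ => isOpen_interior) hcov
  apply Set.Finite.subset t.finite_toSet
  intro z hz
  rcases mem_iUnion₂.mp (ht (mem_univ z)) with ⟨y, hy, hzy⟩
  have hzy' : z = y := hND y ⟨interior_subset hzy, hz⟩
  simpa [hzy'] using hy

lemma inter_fc {X Y : Type} [TopologicalSpace X] [CompactSpace X] [T2Space X]
    [TopologicalSpace Y] [T2Space Y]
    {π : X → Y} (hπc : Continuous π) (hπs : Function.Surjective π)
    (H : ∀ F₁ F₂ : Set X, IsClosed F₁ → IsClosed F₂ → Disjoint F₁ F₂ →
      (π '' F₁ ∩ π '' F₂).Finite)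
    (y : Y) : FullyClosedAt π y := by
  intro s U hUo hUc
  obtain ⟨V, hVc, hVo, hVcl⟩ := exists_subset_iUnion_closure_subset
    (isClosed_singleton.preimage hπc) hUo (fun x _ => Set.toFinite _) hUc
  set D : Set Y := (⋃ i, (π '' closure (V i) ∩ π '' (U i)ᶜ)) \ {y} with hD
  have hDfin : D.Finite :=
    (Set.finite_iUnion fun i => H _ _ isClosed_closure (hUo i).isClosed_compl
      (disjoint_compl_right.mono_left (hVcl i))).diff
  set G : Set Y := (π '' (⋃ i, V i)ᶜ ∪ D)ᶜ with hG
  have hGo : IsOpen G := by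
    refine (IsClosed.union ?_ hDfin.isClosed).isOpen_compl
    exact hπc.isClosedMap _ (isOpen_iUnion hVo).isClosed_compl
  have hyG : y ∈ G := by
    intro hy
    rcases hy with hy | hy
    · rcases hy with ⟨x, hx, rfl⟩
      exact hx (hVc rfl)
    · exact hy.2 rfl
  refine mem_nhds_iff.2 ⟨G, ?_, hGo, hyG⟩
  intro z hz
  by_cases hzy : z = y
  · exact Or.inl (by simp [hzy])
  · right
    obtain ⟨x, hx⟩ := hπs z
    have hxV : x ∈ ⋃ i, V i := by
      by_contra hxV
      exact hz (Or.inl ⟨x, hxV, hx⟩)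
    rcases mem_iUnion.mp hxV with ⟨i, hi⟩
    refine mem_iUnion.2 ⟨i, ?_⟩
    intro hcon
    exact hz (Or.inr ⟨mem_iUnion.2 ⟨i, ⟨x, subset_closure hi, hx⟩, hcon⟩, hzy⟩)

lemma osc_bddAbove {X : Type} [TopologicalSpace X] [CompactSpace X] (f : C(X, ℝ)) (A : Set X) :
    BddAbove ((fun p : X × X => f p.1 - f p.2) '' (A ×ˢ A)) := by
  obtain ⟨C, hC⟩ := (isCompact_range f.continuous).bddAbove
  obtain ⟨c, hc⟩ := (isCompact_range f.continuous).bddBelow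
  refine ⟨C - c, ?_⟩
  rintro r ⟨⟨a, b⟩, ⟨_, _⟩, rfl⟩
  exact sub_le_sub (hC (mem_range_self a)) (hc (mem_range_self b))

/-- A continuous surjection `π : X → Y` between compact Hausdorff spaces is fully closed
iff for every `f ∈ C(X)` the family of oscillations `(osc_{π⁻¹(y)} f)_{y ∈ Y}` lies in
`c₀(Y)`, i.e. for every `ε > 0` the set `{y : osc_{π⁻¹(y)} f > ε}` is finite. -/
theorem stmt5 {X Y : Type} [TopologicalSpace X] [CompactSpace X] [T2Space X]
    [TopologicalSpace Y] [CompactSpace Y] [T2Space Y]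
    (π : X → Y) (hπc : Continuous π) (hπs : Function.Surjective π) :
    (∀ y, FullyClosedAt π y) ↔
      ∀ f : C(X, ℝ), ∀ ε > (0 : ℝ), {y : Y | ε < osc (⇑f) (π ⁻¹' {y})}.Finite := by
  constructor
  · intro hfc f ε hε
    obtain ⟨C, hC⟩ := (isCompact_range f.continuous).bddAbove
    obtain ⟨c, hc⟩ := (isCompact_range f.continuous).bddBelow
    have hε2 : (0:ℝ) < ε / 2 := by linarith
    set N : ℤ := ⌈(C - c) / (ε / 2)⌉ with hN
    have hsub : {y : Y | ε < osc (⇑f) (π ⁻¹' {y})} ⊆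
        ⋃ k ∈ Set.Icc (0:ℤ) N,
          (π '' (f ⁻¹' Iic (c + k * (ε/2))) ∩ π '' (f ⁻¹' Ici (c + k * (ε/2) + ε/2))) := by
      intro y hy
      obtain ⟨x₀, hx₀⟩ := hπs y
      have hx₀' : x₀ ∈ π ⁻¹' {y} := by simp [hx₀]
      have hne : ((fun p : X × X => f p.1 - f p.2) '' ((π ⁻¹' {y}) ×ˢ (π ⁻¹' {y}))).Nonempty :=
        ⟨0, ⟨(x₀, x₀), ⟨hx₀', hx₀'⟩, by simp⟩⟩
      obtain ⟨r, hr, hrε⟩ := exists_lt_of_lt_csSup hne hy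
      obtain ⟨⟨a, b⟩, ⟨ha, hb⟩, rfl⟩ := hr
      have hrε' : ε < f a - f b := hrε
      set k : ℤ := ⌈(f b - c) / (ε / 2)⌉ with hk
      have hbc : c ≤ f b := hc (mem_range_self b)
      have hbC : f b ≤ C := hC (mem_range_self b)
      have haC : f a ≤ C := hC (mem_range_self a)
      have hk0 : 0 ≤ k := Int.ceil_nonneg (div_nonneg (by linarith) hε2.le)
      have hkN : k ≤ N := Int.ceil_le_ceil ((div_le_div_iff_of_pos_right hε2).mpr (by linarith))
      have h1 : (f b - c) / (ε/2) ≤ (k:ℝ) := Int.le_ceil _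
      have h1' : f b - c ≤ (k:ℝ) * (ε/2) := (div_le_iff₀ hε2).mp h1
      have h2 : (k:ℝ) < (f b - c) / (ε/2) + 1 := Int.ceil_lt_add_one _
      have hmul : ((f b - c) / (ε/2)) * (ε/2) = f b - c := div_mul_cancel₀ _ hε2.ne'
      have h2' : (k:ℝ) * (ε/2) < f b - c + ε/2 := by nlinarith
      refine mem_iUnion₂.2 ⟨k, ⟨hk0, hkN⟩, ⟨b, ?_, hb⟩, ⟨a, ?_, ha⟩⟩
      · simp only [mem_preimage, mem_Iic]; linarith
      · simp only [mem_preimage, mem_Ici]; linarith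
    refine ((Set.finite_Icc (0:ℤ) N).biUnion fun k _ => ?_).subset hsub
    refine fc_inter hfc (isClosed_Iic.preimage f.continuous) (isClosed_Ici.preimage f.continuous)
      (Disjoint.preimage _ (Set.disjoint_left.mpr fun x hx1 hx2 => ?_))
    simp only [mem_Iic] at hx1
    simp only [mem_Ici] at hx2
    linarith
  · intro hosc y
    refine inter_fc hπc hπs ?_ y
    intro F₁ F₂ h₁ h₂ hd
    obtain ⟨g, hg0, hg1, _⟩ := exists_continuous_zero_one_of_isClosed h₁ h₂ hd
    refine (hosc g (1/2) (by norm_num)).subset ?_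
    rintro z ⟨⟨a, ha, rfl⟩, ⟨b, hb, hab⟩⟩
    have hmem : (1:ℝ) ∈ ((fun p : X × X => g p.1 - g p.2) ''
        ((π ⁻¹' {π a}) ×ˢ (π ⁻¹' {π a}))) :=
      ⟨(b, a), ⟨by simp [hab], by simp⟩, by simp [hg0 ha, hg1 hb]⟩
    have h1 : (1:ℝ) ≤ osc (⇑g) (π ⁻¹' {π a}) := le_csSup (osc_bddAbove g _) hmem
    simp only [mem_setOf_eq]
    linarith
end

section
/- Let γ be an ordinal and X = lim← S the limit of a well-ordered continuous inverse system S = {X_α, π^β_α : α ≤ β < γ} of Hausdorff compacta. Let α₀ < γ be a limit ordinal, f ∈ C(X) and ε > 0, and suppose that osc_{π_{α₀}⁻¹(x)} f < ε for every x ∈ X_{α₀}. Then there exists β₀ < α₀ such that osc_{π_β⁻¹(x)} f < ε for every β ∈ [β₀, α₀) and every x ∈ X_β. -/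
open Set Topology

/-- A well-ordered inverse system of Hausdorff compacta indexed by the ordinals below `γ`,
with `X 0` a singleton and continuous surjective bonding maps `π : X β → X α` (`α ≤ β < γ`). -/
structure InvSystemAux (γ : Ordinal) where
  X : Ordinal → Type
  [topo : ∀ α, TopologicalSpace (X α)]
  compact : ∀ α, α < γ → CompactSpace (X α)
  t2 : ∀ α, α < γ → T2Space (X α)
  zero_nonempty : Nonempty (X 0)
  zero_subsingleton : Subsingleton (X 0)
  π : ∀ {α β : Ordinal}, α ≤ β → X β → X α
  π_cont : ∀ {α β : Ordinal} (h : α ≤ β), β < γ → Continuous (π h)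
  π_surj : ∀ {α β : Ordinal} (h : α ≤ β), β < γ → Function.Surjective (π h)
  π_id : ∀ {α : Ordinal} (h : α ≤ α) (x : X α), π h x = x
  π_comp : ∀ {α β δ : Ordinal} (h1 : α ≤ β) (h2 : β ≤ δ) (x : X δ),
    π h1 (π h2 x) = π (h1.trans h2) x

attribute [instance] InvSystemAux.topo

/-- The space of threads of the system below level `α` (so `S.lim γ` is the limit of the
system, a subspace of the product `∏_{β<γ} X β`). -/
def InvSystemAux.lim {γ : Ordinal} (S : InvSystemAux γ) (α : Ordinal) : Type 1 :=
  {p : ∀ β : Set.Iio α, S.X β // ∀ (β δ : Set.Iio α) (h : (β : Ordinal) ≤ δ), S.π h (p δ) = p β}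

instance {γ : Ordinal} (S : InvSystemAux γ) (α : Ordinal) : TopologicalSpace (S.lim α) :=
  instTopologicalSpaceSubtype

/-- The canonical map from `X α` to the space of threads below `α`. -/
def InvSystemAux.toLim {γ : Ordinal} (S : InvSystemAux γ) (α : Ordinal) (x : S.X α) :
    S.lim α :=
  ⟨fun β => S.π β.2.le x, fun _ δ h => S.π_comp h δ.2.le x⟩

/-- The limit projection from the limit of the system onto the level `α < γ`. -/
def InvSystemAux.proj {γ : Ordinal} (S : InvSystemAux γ) (α : Ordinal) (h : α < γ) :
    S.lim γ → S.X α :=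
  fun p => p.1 ⟨α, h⟩

/-- A well-ordered continuous inverse system of Hausdorff compacta: at every limit ordinal
`α < γ` the canonical map from `X α` to the inverse limit of the levels below `α` is a
homeomorphism. -/
structure InvSystem (γ : Ordinal) extends InvSystemAux γ where
  cont_limit : ∀ (α : Ordinal), α < γ → Order.IsSuccLimit α → IsHomeomorph (toInvSystemAux.toLim α)

/-- An inverse system is F-decomposable if all its bonding maps are fully closed. -/
def InvSystem.FDecomposable {γ : Ordinal} (S : InvSystem γ) : Prop :=
  ∀ {α β : Ordinal} (h : α ≤ β), β < γ → FullyClosed (S.π h)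

namespace InvSystemAux

lemma proj_continuous {γ : Ordinal} (S : InvSystemAux γ) (α : Ordinal) (h : α < γ) :
    Continuous (S.proj α h) :=
  (continuous_apply (⟨α, h⟩ : Set.Iio γ)).comp continuous_subtype_val

lemma limCompact {γ : Ordinal} (S : InvSystemAux γ) : CompactSpace (S.lim γ) := by
  haveI : ∀ β : Set.Iio γ, CompactSpace (S.X β) := fun β => S.compact β β.2
  haveI : ∀ β : Set.Iio γ, T2Space (S.X β) := fun β => S.t2 β β.2
  have hclosed : IsClosed {p : ∀ β : Set.Iio γ, S.X β |
      ∀ (β δ : Set.Iio γ) (h : (β : Ordinal) ≤ δ), S.π h (p δ) = p β} := by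
    have heq : {p : ∀ β : Set.Iio γ, S.X β |
        ∀ (β δ : Set.Iio γ) (h : (β : Ordinal) ≤ δ), S.π h (p δ) = p β} =
        ⋂ (β : Set.Iio γ) (δ : Set.Iio γ) (h : (β : Ordinal) ≤ δ),
          {p | S.π h (p δ) = p β} := by
      ext p; simp [Set.mem_iInter, Set.mem_setOf_eq]
    rw [heq]
    refine isClosed_iInter fun β => isClosed_iInter fun δ => isClosed_iInter fun h => ?_
    exact isClosed_eq ((S.π_cont h δ.2).comp (continuous_apply δ)) (continuous_apply β)
  exact isCompact_iff_compactSpace.mp hclosed.isCompact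

end InvSystemAux

/-- Let `X` be the limit of a well-ordered continuous inverse system of Hausdorff
compacta, `α₀ < γ` a limit ordinal, `f ∈ C(X)`, `ε > 0`, and suppose
`osc_{π_{α₀}⁻¹(x)} f < ε` for all `x ∈ X_{α₀}`. Then there is `β₀ < α₀` such that
`osc_{π_β⁻¹(x)} f < ε` for every `β ∈ [β₀, α₀)` and every `x ∈ X_β`. -/
theorem stmt17 {γ : Ordinal} (S : InvSystem γ) (α₀ : Ordinal) (hα₀γ : α₀ < γ)
    (hlim : Order.IsSuccLimit α₀) (f : S.lim γ → ℝ) (hf : Continuous f) (ε : ℝ) (hε : 0 < ε)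
    (hosc : ∀ x : S.X α₀, osc f (S.proj α₀ hα₀γ ⁻¹' {x}) < ε) :
    ∃ β₀ < α₀, ∀ (β : Ordinal), β₀ ≤ β → ∀ (hβ : β < α₀) (x : S.X β),
      osc f (S.proj β (hβ.trans hα₀γ) ⁻¹' {x}) < ε := by
  by_contra hcon
  push_neg at hcon
  haveI : CompactSpace (S.lim γ) := S.toInvSystemAux.limCompact
  have hgc : Continuous fun p : S.lim γ × S.lim γ => f p.1 - f p.2 :=
    (hf.comp continuous_fst).sub (hf.comp continuous_snd)
  have hbdd : ∀ A : Set (S.lim γ),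
      BddAbove ((fun p : S.lim γ × S.lim γ => f p.1 - f p.2) '' (A ×ˢ A)) := fun A =>
    (isCompact_univ.bddAbove_image hgc.continuousOn).mono
      (Set.image_mono (Set.subset_univ _))
  -- the family of closed sets
  set K : (Set.Iio α₀ × ℕ) → Set (S.lim γ × S.lim γ) := fun q =>
    {p | S.proj q.1 (q.1.2.trans hα₀γ) p.1 = S.proj q.1 (q.1.2.trans hα₀γ) p.2 ∧
      ε - 1 / (q.2 + 1) ≤ f p.1 - f p.2} with hK
  have hKclosed : ∀ q, IsClosed (K q) := by
    intro q
    haveI : T2Space (S.X q.1) := S.t2 q.1 (q.1.2.trans hα₀γ)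
    exact (isClosed_eq
        ((S.toInvSystemAux.proj_continuous q.1 (q.1.2.trans hα₀γ)).comp continuous_fst)
        ((S.toInvSystemAux.proj_continuous q.1 (q.1.2.trans hα₀γ)).comp continuous_snd)).inter
      (isClosed_le continuous_const hgc)
  have hKcompact : ∀ q, IsCompact (K q) := fun q => (hKclosed q).isCompact
  have hKmono : ∀ (q q' : Set.Iio α₀ × ℕ), (q.1 : Ordinal) ≤ q'.1 → q.2 ≤ q'.2 →
      K q' ⊆ K q := by
    rintro q q' h1 h2 ⟨a, b⟩ ⟨hab, hfb⟩
    constructor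
    · have ha := a.2 ⟨q.1, q.1.2.trans hα₀γ⟩ ⟨q'.1, q'.1.2.trans hα₀γ⟩ h1
      have hb := b.2 ⟨q.1, q.1.2.trans hα₀γ⟩ ⟨q'.1, q'.1.2.trans hα₀γ⟩ h1
      show a.1 _ = b.1 _
      rw [← ha, ← hb]
      exact congrArg _ hab
    · refine le_trans ?_ hfb
      have hcast : ((q.2 : ℝ) + 1) ≤ ((q'.2 : ℝ) + 1) := by exact_mod_cast Nat.succ_le_succ h2
      have h1n : (1 : ℝ) / (q'.2 + 1) ≤ 1 / (q.2 + 1) :=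
        one_div_le_one_div_of_le (by positivity) hcast
      linarith
  have hKne : ∀ q, (K q).Nonempty := by
    rintro ⟨⟨β₀, hβ₀⟩, n⟩
    obtain ⟨β, hβ₀β, hβ, x, hx⟩ := hcon β₀ hβ₀
    have hεle : ε ≤ osc f (S.proj β (hβ.trans hα₀γ) ⁻¹' {x}) := hx
    set s := (fun p : S.lim γ × S.lim γ => f p.1 - f p.2) ''
      ((S.proj β (hβ.trans hα₀γ) ⁻¹' {x}) ×ˢ (S.proj β (hβ.trans hα₀γ) ⁻¹' {x})) with hs
    have hsne : s.Nonempty := by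
      by_contra hne
      rw [Set.not_nonempty_iff_eq_empty] at hne
      have : osc f (S.proj β (hβ.trans hα₀γ) ⁻¹' {x}) = 0 := by
        rw [osc, ← hs, hne, Real.sSup_empty]
      linarith
    have hlt : ε - 1 / (n + 1) < sSup s := by
      have h1 : (0 : ℝ) < 1 / ((n : ℝ) + 1) := by positivity
      calc ε - 1 / (n + 1) < ε := by linarith
        _ ≤ sSup s := hεle
    obtain ⟨y, hy, hylt⟩ := exists_lt_of_lt_csSup hsne hlt
    obtain ⟨⟨a, b⟩, ⟨ha, hb⟩, rfl⟩ := hy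
    refine ⟨(a, b), ?_, le_of_lt hylt⟩
    have ha' : S.proj β (hβ.trans hα₀γ) a = x := ha
    have hb' : S.proj β (hβ.trans hα₀γ) b = x := hb
    have hta := a.2 ⟨β₀, hβ₀.trans hα₀γ⟩ ⟨β, hβ.trans hα₀γ⟩ hβ₀β
    have htb := b.2 ⟨β₀, hβ₀.trans hα₀γ⟩ ⟨β, hβ.trans hα₀γ⟩ hβ₀β
    show a.1 _ = b.1 _
    rw [← hta, ← htb]
    show S.π hβ₀β (S.proj β (hβ.trans hα₀γ) a) = S.π hβ₀β (S.proj β (hβ.trans hα₀γ) b)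
    rw [ha', hb']
  have hdir : Directed (· ⊇ ·) K := by
    rintro ⟨⟨α, hα⟩, n⟩ ⟨⟨α', hα'⟩, n'⟩
    refine ⟨(⟨max α α', Set.mem_Iio.mpr (max_lt hα hα')⟩, max n n'), ?_, ?_⟩
    · exact hKmono _ _ (le_max_left _ _) (le_max_left _ _)
    · exact hKmono _ _ (le_max_right _ _) (le_max_right _ _)
  haveI : Nonempty (Set.Iio α₀ × ℕ) := ⟨(⟨0, hlim.pos⟩, 0)⟩
  obtain ⟨⟨a, b⟩, hp⟩ :=
    IsCompact.nonempty_iInter_of_directed_nonempty_isCompact_isClosed K hdir hKne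
      hKcompact hKclosed
  simp only [Set.mem_iInter] at hp
  have hfib : ∀ (β : Ordinal) (hβ : β < α₀),
      S.proj β (hβ.trans hα₀γ) a = S.proj β (hβ.trans hα₀γ) b :=
    fun β hβ => (hp (⟨β, hβ⟩, 0)).1
  have hfab : ε ≤ f a - f b := by
    by_contra h
    push_neg at h
    obtain ⟨n, hn⟩ := exists_nat_one_div_lt (sub_pos.mpr h)
    have := (hp (⟨0, hlim.pos⟩, n)).2
    linarith
  -- same fiber at level α₀
  have heq : S.proj α₀ hα₀γ a = S.proj α₀ hα₀γ b := by
    apply (S.cont_limit α₀ hα₀γ hlim).injective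
    apply Subtype.ext
    funext β
    show S.π β.2.le (S.proj α₀ hα₀γ a) = S.π β.2.le (S.proj α₀ hα₀γ b)
    have hta := a.2 ⟨β, β.2.trans hα₀γ⟩ ⟨α₀, hα₀γ⟩ β.2.le
    have htb := b.2 ⟨β, β.2.trans hα₀γ⟩ ⟨α₀, hα₀γ⟩ β.2.le
    show S.π β.2.le (a.1 ⟨α₀, hα₀γ⟩) = S.π β.2.le (b.1 ⟨α₀, hα₀γ⟩)
    rw [hta, htb]
    exact hfib β β.2
  have := hosc (S.proj α₀ hα₀γ a)
  have hmem : f a - f b ∈ (fun p : S.lim γ × S.lim γ => f p.1 - f p.2) ''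
      ((S.proj α₀ hα₀γ ⁻¹' {S.proj α₀ hα₀γ a}) ×ˢ
        (S.proj α₀ hα₀γ ⁻¹' {S.proj α₀ hα₀γ a})) :=
    ⟨(a, b), ⟨rfl, heq.symm⟩, rfl⟩
  have hge : ε ≤ osc f (S.proj α₀ hα₀γ ⁻¹' {S.proj α₀ hα₀γ a}) :=
    le_trans hfab (le_csSup (hbdd _) hmem)
  linarith
end
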